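/- arXiv:2402.09657 — 2 statements merged into one kernel-verified Lean document; each statement's English description precedes it below -/
import Mathlib

section
/- Let ĥ ∼ CN(0,1), v ∼ CN(0,1) independent, ρ ∈ (0,1], and h = ρĥ + √(1−ρ²)v. Define ξ = λ·Re(h*·ĥ)/|ĥ|² if |ĥ|² ≥ γ_th and ξ = 0 otherwise, where γ_th > 0. Then with λ = e^{γ_th}/ρ, E[ξ] = 1. -/
open MeasureTheory ProbabilityTheory Real Set
open scoped NNReal ENNReal


lemma pdf_half (x : ℝ) :
    gaussianPDFReal 0 (1/2) x = (Real.sqrt π)⁻¹ * Real.exp (-x^2) := by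
  rw [gaussianPDFReal]
  norm_num
  have h2 : Real.sqrt 2 ≠ 0 := by positivity
  field_simp

lemma gauss_int (g : ℝ → ℝ) :
    ∫ x, g x ∂(gaussianReal 0 (1/2)) = ∫ x, gaussianPDFReal 0 (1/2) x * g x := by
  rw [gaussianReal_of_var_ne_zero _ (by norm_num : (1/2 : ℝ≥0) ≠ 0)]
  have : (gaussianPDF 0 (1/2)) = fun x => ((gaussianPDFReal 0 (1/2) x).toNNReal : ℝ≥0∞) := rfl
  rw [this, integral_withDensity_eq_integral_smul
    ((measurable_gaussianPDFReal 0 (1/2)).real_toNNReal) g]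
  congr 1
  ext x
  simp only [NNReal.smul_def, smul_eq_mul]
  rw [Real.coe_toNNReal _ (gaussianPDFReal_nonneg 0 (1/2) x)]

lemma gauss_mean_zero : ∫ x, x ∂(gaussianReal 0 (1/2)) = 0 := by
  rw [gauss_int]
  have h : ∀ x : ℝ, gaussianPDFReal 0 (1/2) x * x = (Real.sqrt π)⁻¹ * (x * Real.exp (-x^2)) := by
    intro x; rw [pdf_half]; ring
  simp_rw [h]
  rw [integral_const_mul]
  have hint : Integrable (fun x : ℝ => x * Real.exp (-x^2)) := by
    have := integrable_mul_exp_neg_mul_sq (b := 1) one_pos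
    simpa using this
  have hF : Integrable (fun x : ℝ => -Real.exp (-x^2) / 2) := by
    have := integrable_exp_neg_mul_sq (b := 1) one_pos
    exact ((this.const_mul (-(1:ℝ)/2)).congr (by
      filter_upwards with x; ring_nf))
  have hderiv : ∀ x : ℝ, HasDerivAt (fun y : ℝ => -Real.exp (-y^2) / 2)
      (x * Real.exp (-x^2)) x := by
    intro x
    have h1 : HasDerivAt (fun y : ℝ => -y^2) (-(2*x)) x := by
      simpa using ((hasDerivAt_pow 2 x).fun_neg)
    have h2 := (h1.exp)
    have h3 := (h2.div_const 2).fun_neg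
    convert h3 using 1
    · rfl
    · rfl
    · funext y; ring
    · ring
  rw [integral_eq_zero_of_hasDerivAt_of_integrable hderiv hint hF, mul_zero]

lemma gauss_integrable_id : Integrable (fun x : ℝ => x) (gaussianReal 0 (1/2)) := by
  rw [gaussianReal_of_var_ne_zero _ (by norm_num : (1/2 : ℝ≥0) ≠ 0)]
  rw [integrable_withDensity_iff (measurable_gaussianPDF 0 (1/2))
    (Filter.Eventually.of_forall fun x => ENNReal.ofReal_lt_top)]
  have : ∀ x : ℝ, x * (gaussianPDF 0 (1/2) x).toReal
      = (Real.sqrt π)⁻¹ * (x * Real.exp (-x^2)) := by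
    intro x
    rw [gaussianPDF, ENNReal.toReal_ofReal (gaussianPDFReal_nonneg 0 (1/2) x), pdf_half]
    ring
  refine (Integrable.congr ?_ (Filter.Eventually.of_forall fun x => (this x).symm))
  have := integrable_mul_exp_neg_mul_sq (b := 1) one_pos
  exact ((by simpa using this : Integrable (fun x : ℝ => x * Real.exp (-x^2)))).const_mul _

lemma hasDerivAt_F (x : ℝ) :
    HasDerivAt (fun y : ℝ => -Real.exp (-y^2) / 2) (x * Real.exp (-x^2)) x := by
  have h1 : HasDerivAt (fun y : ℝ => -y^2) (-(2*x)) x := by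
    simpa using ((hasDerivAt_pow 2 x).fun_neg)
  have h3 := ((h1.exp).div_const 2).fun_neg
  convert h3 using 1
  · rfl
  · rfl
  · funext y; ring
  · ring

lemma integrable_r_exp : Integrable (fun x : ℝ => x * Real.exp (-x^2)) := by
  have := integrable_mul_exp_neg_mul_sq (b := 1) one_pos
  simpa using this

lemma radial_int {γ : ℝ} (hγ : 0 < γ) :
    ∫ r in Ioi (0:ℝ), (if γ ≤ r^2 then r * Real.exp (-r^2) else 0)
      = Real.exp (-γ) / 2 := by
  have hsub : Ici (Real.sqrt γ) ⊆ Ioi (0:ℝ) := fun r hr =>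
    lt_of_lt_of_le (Real.sqrt_pos.mpr hγ) hr
  have heq : EqOn (fun r : ℝ => if γ ≤ r^2 then r * Real.exp (-r^2) else 0)
      ((Ici (Real.sqrt γ)).indicator (fun r => r * Real.exp (-r^2))) (Ioi (0:ℝ)) := by
    intro r hr
    simp only [indicator_apply, mem_Ici]
    have : γ ≤ r^2 ↔ Real.sqrt γ ≤ r := by
      constructor
      · intro h
        have := Real.sqrt_le_sqrt h
        rwa [Real.sqrt_sq (le_of_lt hr)] at this
      · intro h
        calc γ = Real.sqrt γ ^ 2 := (Real.sq_sqrt hγ.le).symm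
        _ ≤ r^2 := by
          apply pow_le_pow_left₀ (Real.sqrt_nonneg γ) h
    simp [this]
  rw [setIntegral_congr_fun measurableSet_Ioi heq,
    setIntegral_indicator measurableSet_Ici,
    inter_eq_self_of_subset_right hsub,
    integral_Ici_eq_integral_Ioi]
  have htend : Filter.Tendsto (fun r : ℝ => -Real.exp (-r^2) / 2) Filter.atTop (nhds 0) := by
    have h1 : Filter.Tendsto (fun r : ℝ => Real.exp (-r^2)) Filter.atTop (nhds 0) := by
      have := Real.tendsto_exp_neg_atTop_nhds_zero.comp
        (Filter.tendsto_pow_atTop (n := 2) (by norm_num))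
      simpa [Function.comp] using this
    have := (h1.div_const 2).neg
    simpa [neg_div] using this
  rw [integral_Ioi_of_hasDerivAt_of_tendsto' (f' := fun r => r * Real.exp (-r^2))
    (fun x _ => hasDerivAt_F x) integrable_r_exp.integrableOn htend]
  rw [Real.sq_sqrt hγ.le]
  ring

lemma prob_tail {γ : ℝ} (hγ : 0 < γ) :
    ∫ p : ℝ × ℝ, (if γ ≤ p.1^2 + p.2^2 then (1:ℝ) else 0)
      ∂((gaussianReal 0 (1/2)).prod (gaussianReal 0 (1/2))) = Real.exp (-γ) := by
  have hs : MeasurableSet {p : ℝ × ℝ | γ ≤ p.1^2 + p.2^2} :=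
    measurableSet_le measurable_const
      (((measurable_fst.pow_const 2).add (measurable_snd.pow_const 2)))
  have hfind : ∀ p : ℝ × ℝ, (if γ ≤ p.1^2 + p.2^2 then (1:ℝ) else 0)
      = ({p : ℝ × ℝ | γ ≤ p.1^2 + p.2^2}).indicator (fun _ => (1:ℝ)) p := by
    intro p; simp [indicator_apply, mem_setOf_eq]
  have hfint : Integrable (fun p : ℝ × ℝ => if γ ≤ p.1^2 + p.2^2 then (1:ℝ) else 0)
      ((gaussianReal 0 (1/2)).prod (gaussianReal 0 (1/2))) := by
    refine Integrable.congr ((integrable_const (1:ℝ)).indicator hs) ?_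
    filter_upwards with p using (hfind p).symm
  rw [integral_prod _ hfint, gauss_int]
  have hpull : ∀ x : ℝ, gaussianPDFReal 0 (1/2) x *
        ∫ y, (if γ ≤ x^2 + y^2 then (1:ℝ) else 0) ∂(gaussianReal 0 (1/2))
      = ∫ y, (if γ ≤ x^2 + y^2 then (1:ℝ) else 0) *
          (gaussianPDFReal 0 (1/2) x * gaussianPDFReal 0 (1/2) y) := by
    intro x
    rw [gauss_int, ← integral_const_mul]
    congr 1; funext y; ring
  simp_rw [hpull]
  have hFint : Integrable (fun z : ℝ × ℝ => (if γ ≤ z.1^2 + z.2^2 then (1:ℝ) else 0) *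
      (gaussianPDFReal 0 (1/2) z.1 * gaussianPDFReal 0 (1/2) z.2))
      (volume.prod volume) := by
    refine Integrable.bdd_mul (c := 1) ?_ ?_ (Filter.Eventually.of_forall fun z => ?_)
    · exact (integrable_gaussianPDFReal 0 (1/2)).mul_prod (integrable_gaussianPDFReal 0 (1/2))
    · exact (Measurable.ite hs measurable_const measurable_const).aestronglyMeasurable
    · by_cases h : γ ≤ z.1^2 + z.2^2 <;> simp [h]
  rw [integral_integral hFint, ← Measure.volume_eq_prod]
  rw [← integral_comp_polarCoord_symm]
  have htgt : polarCoord.target = Ioi (0:ℝ) ×ˢ Ioo (-π) π := rfl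
  have hval : EqOn (fun p : ℝ × ℝ => p.1 •
        ((if γ ≤ (polarCoord.symm p).1^2 + (polarCoord.symm p).2^2 then (1:ℝ) else 0) *
          (gaussianPDFReal 0 (1/2) (polarCoord.symm p).1 *
            gaussianPDFReal 0 (1/2) (polarCoord.symm p).2)))
      (fun p : ℝ × ℝ => (if γ ≤ p.1^2 then p.1 * Real.exp (-p.1^2) else 0) * π⁻¹)
      polarCoord.target := by
    intro p hp
    have hsymm : polarCoord.symm p = (p.1 * cos p.2, p.1 * sin p.2) := rfl
    have hsq : (p.1 * cos p.2)^2 + (p.1 * sin p.2)^2 = p.1^2 := by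
      have := sin_sq_add_cos_sq p.2
      nlinarith [this]
    simp only [hsymm, pdf_half, hsq, smul_eq_mul]
    have hπ : Real.sqrt π ≠ 0 := by positivity
    have hsqrtsq : (Real.sqrt π)⁻¹ * (Real.sqrt π)⁻¹ = π⁻¹ := by
      rw [← mul_inv]
      rw [Real.mul_self_sqrt Real.pi_pos.le]
    have hexp : Real.exp (-(p.1 * cos p.2)^2) * Real.exp (-(p.1 * sin p.2)^2)
        = Real.exp (-p.1^2) := by
      rw [← Real.exp_add]; congr 1; nlinarith [sin_sq_add_cos_sq p.2]
    by_cases h : γ ≤ p.1^2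
    · simp only [h, if_true]
      calc p.1 * (1 * ((Real.sqrt π)⁻¹ * Real.exp (-(p.1 * cos p.2)^2) *
            ((Real.sqrt π)⁻¹ * Real.exp (-(p.1 * sin p.2)^2))))
          = p.1 * (Real.exp (-(p.1*cos p.2)^2) * Real.exp (-(p.1*sin p.2)^2)) *
            ((Real.sqrt π)⁻¹ * (Real.sqrt π)⁻¹) := by ring
        _ = p.1 * Real.exp (-p.1^2) * π⁻¹ := by rw [hexp, hsqrtsq]
    · simp [h]
  rw [setIntegral_congr_fun (htgt ▸ (measurableSet_Ioi.prod measurableSet_Ioo)) hval]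
  rw [htgt, Measure.volume_eq_prod, setIntegral_prod_mul (f := fun r : ℝ => if γ ≤ r^2 then r * Real.exp (-r^2) else 0) (g := fun _ : ℝ => (π:ℝ)⁻¹)]
  rw [radial_int hγ, setIntegral_const]
  simp only [Real.volume_real_Ioo_of_le (by linarith [Real.pi_pos] : -π ≤ π), smul_eq_mul]
  have : π - -π = 2 * π := by ring
  rw [this]
  field_simp

noncomputable def gA (γ : ℝ) (z : ℂ) : ℝ :=
  if γ ≤ Complex.normSq z then z.re / Complex.normSq z else 0

noncomputable def gB (γ : ℝ) (z : ℂ) : ℝ :=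
  if γ ≤ Complex.normSq z then z.im / Complex.normSq z else 0

lemma measurable_gA (γ : ℝ) : Measurable (gA γ) := by
  unfold gA
  exact Measurable.ite (measurableSet_le measurable_const Complex.continuous_normSq.measurable)
    (Complex.measurable_re.div Complex.continuous_normSq.measurable) measurable_const

lemma measurable_gB (γ : ℝ) : Measurable (gB γ) := by
  unfold gB
  exact Measurable.ite (measurableSet_le measurable_const Complex.continuous_normSq.measurable)
    (Complex.measurable_im.div Complex.continuous_normSq.measurable) measurable_const

lemma abs_coord_le (z : ℂ) : |z.re| ≤ Real.sqrt (Complex.normSq z) ∧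
    |z.im| ≤ Real.sqrt (Complex.normSq z) := by
  constructor
  · rw [← Complex.norm_def]; exact Complex.abs_re_le_norm z
  · rw [← Complex.norm_def]; exact Complex.abs_im_le_norm z

lemma bound_aux {γ : ℝ} (hγ : 0 < γ) (z : ℂ) (t : ℝ)
    (ht : |t| ≤ Real.sqrt (Complex.normSq z)) (h : γ ≤ Complex.normSq z) :
    |t / Complex.normSq z| ≤ (Real.sqrt γ)⁻¹ := by
  have hS : 0 < Complex.normSq z := lt_of_lt_of_le hγ h
  have hsq : 0 < Real.sqrt (Complex.normSq z) := Real.sqrt_pos.mpr hS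
  rw [abs_div, abs_of_pos hS]
  calc |t| / Complex.normSq z ≤ Real.sqrt (Complex.normSq z) / Complex.normSq z := by
        gcongr
    _ = (Real.sqrt (Complex.normSq z))⁻¹ := by
        rw [Real.sqrt_div_self', one_div]
    _ ≤ (Real.sqrt γ)⁻¹ := by
        apply inv_anti₀ (Real.sqrt_pos.mpr hγ)
        exact Real.sqrt_le_sqrt h

lemma bound_gA {γ : ℝ} (hγ : 0 < γ) (z : ℂ) : ‖gA γ z‖ ≤ (Real.sqrt γ)⁻¹ := by
  rw [Real.norm_eq_abs]; unfold gA
  by_cases h : γ ≤ Complex.normSq z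
  · simp only [h, if_true]; exact bound_aux hγ z _ (abs_coord_le z).1 h
  · simp [h, inv_nonneg, Real.sqrt_nonneg]

lemma bound_gB {γ : ℝ} (hγ : 0 < γ) (z : ℂ) : ‖gB γ z‖ ≤ (Real.sqrt γ)⁻¹ := by
  rw [Real.norm_eq_abs]; unfold gB
  by_cases h : γ ≤ Complex.normSq z
  · simp only [h, if_true]; exact bound_aux hγ z _ (abs_coord_le z).2 h
  · simp [h, inv_nonneg, Real.sqrt_nonneg]




/-- Lemma 1 (analog case): with `hhat, v` independent standard complex Gaussians,
`h = ρhhat + √(1−ρ²)v`, truncated-channel-inversion distortion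
`ξ = λ·Re(h*hhat)/|hhat|²·1{|hhat|² ≥ γ_th}`, and `λ = e^{γ_th}/ρ`, we have `E[ξ] = 1`. -/
theorem analog_distortion_unbiased
    {Ω : Type*} [MeasurableSpace Ω] (μ : Measure Ω) [IsProbabilityMeasure μ]
    (hhat v : Ω → ℂ) (hhhatmeas : Measurable hhat) (hvmeas : Measurable v)
    (hgauss : ∀ f ∈ ({fun ω => (hhat ω).re, fun ω => (hhat ω).im,
        fun ω => (v ω).re, fun ω => (v ω).im} : Set (Ω → ℝ)),
      Measure.map f μ = gaussianReal 0 (1 / 2))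
    (hindep : iIndepFun
      ![fun ω => (hhat ω).re, fun ω => (hhat ω).im, fun ω => (v ω).re, fun ω => (v ω).im] μ)
    (ρ γth : ℝ) (hρ : ρ ∈ Set.Ioc (0 : ℝ) 1) (hγth : 0 < γth) :
    ∫ ω, (if γth ≤ Complex.normSq (hhat ω) then
        (Real.exp γth / ρ) *
          ((starRingEnd ℂ) ((ρ : ℂ) * hhat ω + (Real.sqrt (1 - ρ ^ 2) : ℂ) * v ω) * hhat ω).re /
            Complex.normSq (hhat ω)
      else 0) ∂μ = 1 := by
  obtain ⟨hρ0, hρ1⟩ := hρ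
  set X : Ω → ℝ := fun ω => (hhat ω).re with hXdef
  set Y : Ω → ℝ := fun ω => (hhat ω).im with hYdef
  set U : Ω → ℝ := fun ω => (v ω).re with hUdef
  set W : Ω → ℝ := fun ω => (v ω).im with hWdef
  have hXmeas : Measurable X := Complex.measurable_re.comp hhhatmeas
  have hYmeas : Measurable Y := Complex.measurable_im.comp hhhatmeas
  have hUmeas : Measurable U := Complex.measurable_re.comp hvmeas
  have hWmeas : Measurable W := Complex.measurable_im.comp hvmeas
  have hf_meas : ∀ i, Measurable (![X, Y, U, W] i) := by
    intro i; fin_cases i <;> assumption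
  -- laws
  have hX : Measure.map X μ = gaussianReal 0 (1/2) := hgauss _ (Set.mem_insert _ _)
  have hY : Measure.map Y μ = gaussianReal 0 (1/2) :=
    hgauss _ (Set.mem_insert_of_mem _ (Set.mem_insert _ _))
  have hU : Measure.map U μ = gaussianReal 0 (1/2) :=
    hgauss _ (Set.mem_insert_of_mem _ (Set.mem_insert_of_mem _ (Set.mem_insert _ _)))
  have hW : Measure.map W μ = gaussianReal 0 (1/2) :=
    hgauss _ (Set.mem_insert_of_mem _ (Set.mem_insert_of_mem _
      (Set.mem_insert_of_mem _ rfl)))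
  -- pair law
  have hXY : IndepFun X Y μ := hindep.indepFun (show (0 : Fin 4) ≠ 1 by decide)
  have hmap_pair : Measure.map (fun ω => (X ω, Y ω)) μ
      = (gaussianReal 0 (1/2)).prod (gaussianReal 0 (1/2)) := by
    rw [(indepFun_iff_map_prod_eq_prod_map_map hXmeas.aemeasurable
      hYmeas.aemeasurable).mp hXY, hX, hY]
  -- normSq as coords
  have hnormSq : ∀ ω, Complex.normSq (hhat ω) = X ω ^ 2 + Y ω ^ 2 := by
    intro ω; rw [Complex.normSq_apply]; ring
  -- term 1
  have hterm1 : ∫ ω, (if γth ≤ Complex.normSq (hhat ω) then Real.exp γth else 0) ∂μ = 1 := by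
    have hFmeas : Measurable (fun p : ℝ × ℝ => if γth ≤ p.1^2 + p.2^2 then Real.exp γth else 0) :=
      Measurable.ite (measurableSet_le measurable_const
        ((measurable_fst.pow_const 2).add (measurable_snd.pow_const 2)))
        measurable_const measurable_const
    have : ∫ ω, (if γth ≤ Complex.normSq (hhat ω) then Real.exp γth else 0) ∂μ
        = ∫ p : ℝ × ℝ, (if γth ≤ p.1^2 + p.2^2 then Real.exp γth else 0)
            ∂(Measure.map (fun ω => (X ω, Y ω)) μ) := by
      rw [integral_map (hXmeas.prodMk hYmeas).aemeasurable hFmeas.aestronglyMeasurable]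
      congr 1; funext ω; rw [hnormSq ω]
    rw [this, hmap_pair]
    have : ∀ p : ℝ × ℝ, (if γth ≤ p.1^2 + p.2^2 then Real.exp γth else 0)
        = Real.exp γth * (if γth ≤ p.1^2 + p.2^2 then (1:ℝ) else 0) := by
      intro p; by_cases h : γth ≤ p.1^2 + p.2^2 <;> simp [h]
    simp_rw [this]
    rw [integral_const_mul, prob_tail hγth, ← Real.exp_add]
    simp
  -- independence of gA∘hhat with U
  have hpairU : IndepFun (fun ω => (X ω, Y ω)) U μ :=
    hindep.indepFun_prodMk hf_meas 0 1 2 (by decide) (by decide)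
  have hpairW : IndepFun (fun ω => (X ω, Y ω)) W μ :=
    hindep.indepFun_prodMk hf_meas 0 1 3 (by decide) (by decide)
  have hmk : Measurable (fun p : ℝ × ℝ => (p.1 : ℂ) + (p.2 : ℂ) * Complex.I) :=
    (Complex.measurable_ofReal.comp measurable_fst).add
      ((Complex.measurable_ofReal.comp measurable_snd).mul_const _)
  have hcompA : (fun p : ℝ × ℝ => gA γth ((p.1 : ℂ) + (p.2 : ℂ) * Complex.I))
      ∘ (fun ω => (X ω, Y ω)) = fun ω => gA γth (hhat ω) := by
    funext ω; simp only [Function.comp_apply]; rw [Complex.re_add_im]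
  have hcompB : (fun p : ℝ × ℝ => gB γth ((p.1 : ℂ) + (p.2 : ℂ) * Complex.I))
      ∘ (fun ω => (X ω, Y ω)) = fun ω => gB γth (hhat ω) := by
    funext ω; simp only [Function.comp_apply]; rw [Complex.re_add_im]
  have hindepA : IndepFun (fun ω => gA γth (hhat ω)) U μ := by
    have h2 := hpairU.comp ((measurable_gA γth).comp hmk) measurable_id
    have h3 : ((gA γth ∘ fun p : ℝ × ℝ => (p.1 : ℂ) + (p.2 : ℂ) * Complex.I)
        ∘ fun ω => (X ω, Y ω)) = fun ω => gA γth (hhat ω) := by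
      funext ω; simp only [Function.comp_apply]; rw [Complex.re_add_im]
    rwa [h3, Function.id_comp] at h2
  have hindepB : IndepFun (fun ω => gB γth (hhat ω)) W μ := by
    have h2 := hpairW.comp ((measurable_gB γth).comp hmk) measurable_id
    have h3 : ((gB γth ∘ fun p : ℝ × ℝ => (p.1 : ℂ) + (p.2 : ℂ) * Complex.I)
        ∘ fun ω => (X ω, Y ω)) = fun ω => gB γth (hhat ω) := by
      funext ω; simp only [Function.comp_apply]; rw [Complex.re_add_im]
    rwa [h3, Function.id_comp] at h2
  -- E U = 0, E W = 0, integrability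
  have hEU : ∫ ω, U ω ∂μ = 0 := by
    have h := integral_map (μ := μ) (f := fun x : ℝ => x) hUmeas.aemeasurable
      (aestronglyMeasurable_id (μ := Measure.map U μ))
    rw [← h, hU, gauss_mean_zero]
  have hEW : ∫ ω, W ω ∂μ = 0 := by
    have h := integral_map (μ := μ) (f := fun x : ℝ => x) hWmeas.aemeasurable
      (aestronglyMeasurable_id (μ := Measure.map W μ))
    rw [← h, hW, gauss_mean_zero]
  have hUint : Integrable U μ := by
    have := (integrable_map_measure (aestronglyMeasurable_id (μ := Measure.map U μ))
      hUmeas.aemeasurable).mp (by rw [hU]; exact gauss_integrable_id)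
    exact this
  have hWint : Integrable W μ := by
    have := (integrable_map_measure (aestronglyMeasurable_id (μ := Measure.map W μ))
      hWmeas.aemeasurable).mp (by rw [hW]; exact gauss_integrable_id)
    exact this
  have haesmA : AEStronglyMeasurable (fun ω => gA γth (hhat ω)) μ :=
    ((measurable_gA γth).comp hhhatmeas).aestronglyMeasurable
  have haesmB : AEStronglyMeasurable (fun ω => gB γth (hhat ω)) μ :=
    ((measurable_gB γth).comp hhhatmeas).aestronglyMeasurable
  have hintA : Integrable (fun ω => gA γth (hhat ω) * U ω) μ :=
    hUint.bdd_mul haesmA (Filter.Eventually.of_forall fun ω => bound_gA hγth _)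
  have hintB : Integrable (fun ω => gB γth (hhat ω) * W ω) μ :=
    hWint.bdd_mul haesmB (Filter.Eventually.of_forall fun ω => bound_gB hγth _)
  have hcrossA : ∫ ω, gA γth (hhat ω) * U ω ∂μ = 0 := by
    have h' : ∫ ω, gA γth (hhat ω) * U ω ∂μ
        = (∫ ω, gA γth (hhat ω) ∂μ) * ∫ ω, U ω ∂μ :=
      hindepA.integral_fun_mul_eq_mul_integral haesmA hUint.aestronglyMeasurable
    rw [h', hEU, mul_zero]
  have hcrossB : ∫ ω, gB γth (hhat ω) * W ω ∂μ = 0 := by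
    have h' : ∫ ω, gB γth (hhat ω) * W ω ∂μ
        = (∫ ω, gB γth (hhat ω) ∂μ) * ∫ ω, W ω ∂μ :=
      hindepB.integral_fun_mul_eq_mul_integral haesmB hWint.aestronglyMeasurable
    rw [h', hEW, mul_zero]
  -- pointwise decomposition
  set c : ℝ := Real.sqrt (1 - ρ^2) with hcdef
  set C : ℝ := Real.exp γth * c / ρ with hCdef
  have key : ∀ ω, (if γth ≤ Complex.normSq (hhat ω) then
        (Real.exp γth / ρ) *
          ((starRingEnd ℂ) ((ρ : ℂ) * hhat ω + (c : ℂ) * v ω) * hhat ω).re /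
            Complex.normSq (hhat ω)
      else 0)
      = (if γth ≤ Complex.normSq (hhat ω) then Real.exp γth else 0)
        + C * (gA γth (hhat ω) * U ω) + C * (gB γth (hhat ω) * W ω) := by
    intro ω
    by_cases h : γth ≤ Complex.normSq (hhat ω)
    · have hS0 : Complex.normSq (hhat ω) ≠ 0 := (lt_of_lt_of_le hγth h).ne'
      simp only [h, if_true, gA, gB, hCdef]
      have hre : ((starRingEnd ℂ) ((ρ : ℂ) * hhat ω + (c : ℂ) * v ω) * hhat ω).re
          = ρ * ((hhat ω).re * (hhat ω).re + (hhat ω).im * (hhat ω).im)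
            + c * (U ω * (hhat ω).re + W ω * (hhat ω).im) := by
        simp [Complex.mul_re, Complex.mul_im, Complex.add_re, Complex.add_im, hUdef, hWdef]
        ring
      have hden : (hhat ω).re * (hhat ω).re + (hhat ω).im * (hhat ω).im ≠ 0 := by
        rw [← Complex.normSq_apply]; exact hS0
      rw [hre, Complex.normSq_apply]
      field_simp [hden, hρ0.ne']
      have hden2 : (hhat ω).re ^ 2 + (hhat ω).im ^ 2 ≠ 0 := by rw [sq, sq]; exact hden
      field_simp
      ring
    · simp [h, gA, gB]
  simp_rw [key]
  have hImeas : MeasurableSet {ω | γth ≤ Complex.normSq (hhat ω)} :=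
    measurableSet_le measurable_const (Complex.continuous_normSq.measurable.comp hhhatmeas)
  have hI1 : Integrable (fun ω => if γth ≤ Complex.normSq (hhat ω) then Real.exp γth else 0) μ := by
    refine Integrable.congr ((integrable_const (Real.exp γth)).indicator hImeas) ?_
    filter_upwards with ω
    simp [indicator_apply, mem_setOf_eq]
  have hIsum1 : Integrable (fun ω => (if γth ≤ Complex.normSq (hhat ω) then Real.exp γth else 0)
      + C * (gA γth (hhat ω) * U ω)) μ := hI1.add (hintA.const_mul C)
  rw [integral_add hIsum1 (hintB.const_mul C),
    integral_add hI1 (hintA.const_mul C), integral_const_mul, integral_const_mul,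
    hcrossA, hcrossB, hterm1]
  ring
end

section
/- Let ĥ ∼ CN(0,1), v ∼ CN(0,1) independent, ρ ∈ (0,1], h = ρĥ + √(1−ρ²)v, γ_th > 0, λ = e^{γ_th}/ρ, and ξ = λ·Re(h*ĥ)/|ĥ|²·1{|ĥ|² ≥ γ_th}. Then E[ξ²] = e^{γ_th} + ((1−ρ²)/(2ρ²))·e^{2γ_th}·E₁(γ_th), where E₁ is the exponential integral E₁(x) = ∫_x^∞ e^{−t}/t dt. -/
open MeasureTheory ProbabilityTheory

open MeasureTheory ProbabilityTheory Real Set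
open scoped NNReal ENNReal

namespace AnalogAux

noncomputable def nn : ℝ → ℝ≥0 := fun x => (gaussianPDFReal 0 (1/2) x).toNNReal

lemma nn_meas : Measurable nn := (measurable_gaussianPDFReal 0 (1/2)).real_toNNReal

lemma pdf_eq (x : ℝ) : gaussianPDFReal 0 (1/2) x = (Real.sqrt π)⁻¹ * Real.exp (-x^2) := by
  rw [gaussianPDFReal]
  have h1 : (2:ℝ) * π * ((1/2 : ℝ≥0):ℝ) = π := by push_cast; ring
  have h2 : (2:ℝ) * ((1/2 : ℝ≥0):ℝ) = 1 := by push_cast; ring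
  rw [h1, h2]
  norm_num

lemma nn_coe (x : ℝ) : ((nn x : ℝ≥0) : ℝ) = (Real.sqrt π)⁻¹ * Real.exp (-x^2) := by
  rw [nn, Real.coe_toNNReal _ (gaussianPDFReal_nonneg 0 (1/2) x), pdf_eq]

noncomputable def P : Measure ℝ := gaussianReal 0 (1/2)

instance : IsProbabilityMeasure P := by unfold P; infer_instance

lemma P_eq : P = (volume : Measure ℝ).withDensity (fun x => ((nn x : ℝ≥0) : ℝ≥0∞)) := by
  rw [P, gaussianReal_of_var_ne_zero _ (by norm_num)]
  rfl

lemma prodP_eq : P.prod P = (volume : Measure (ℝ × ℝ)).withDensity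
    (fun z => ((nn z.1 * nn z.2 : ℝ≥0) : ℝ≥0∞)) := by
  rw [Measure.volume_eq_prod]
  refine Measure.prod_eq fun s t hs ht => ?_
  rw [withDensity_apply _ (hs.prod ht), ← Measure.prod_restrict]
  simp_rw [ENNReal.coe_mul]
  rw [lintegral_prod_mul (nn_meas.coe_nnreal_ennreal.aemeasurable)
    (nn_meas.coe_nnreal_ennreal.aemeasurable)]
  rw [P_eq, withDensity_apply _ hs, withDensity_apply _ ht]

lemma integral_radial_core (f : ℝ → ℝ) :
    ∫ z : ℝ × ℝ, f (z.1^2 + z.2^2) = π * ∫ t in Ioi (0:ℝ), f t := by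
  have h1 := (integral_comp_polarCoord_symm (fun z : ℝ × ℝ => f (z.1^2 + z.2^2))).symm
  rw [h1]
  have h2 : ∀ p : ℝ × ℝ, (polarCoord.symm p).1^2 + (polarCoord.symm p).2^2 = p.1^2 := by
    intro p
    simp only [polarCoord_symm_apply]
    nlinarith [Real.sin_sq_add_cos_sq p.2]
  simp_rw [h2, smul_eq_mul]
  have htarget : polarCoord.target = Ioi (0:ℝ) ×ˢ Ioo (-π) π := rfl
  rw [htarget]
  rw [Measure.volume_eq_prod, ← Measure.prod_restrict]
  calc ∫ p : ℝ × ℝ, p.1 * f (p.1^2)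
        ∂((volume.restrict (Ioi 0)).prod (volume.restrict (Ioo (-π) π)))
      = (∫ r in Ioi (0:ℝ), r * f (r^2)) * ∫ θ in Ioo (-π) π, (1:ℝ) := by
        rw [← integral_prod_mul (fun r : ℝ => r * f (r^2)) (fun _ : ℝ => (1:ℝ))]
        simp
    _ = (∫ r in Ioi (0:ℝ), r * f (r^2)) * (2 * π) := by
        rw [setIntegral_const]
        rw [measureReal_def, Real.volume_Ioo]
        rw [smul_eq_mul, mul_one, ENNReal.toReal_ofReal (by linarith [pi_pos] : (0:ℝ) ≤ π - -π)]
        ring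
    _ = ((1/2) * ∫ t in Ioi (0:ℝ), f t) * (2 * π) := by
        congr 1
        have h4 := integral_comp_rpow_Ioi_of_pos (g := f) (p := 2) two_pos
        have h5 : ∀ x : ℝ, x ∈ Ioi (0:ℝ) →
            (2 * x ^ ((2:ℝ) - 1)) • f (x ^ (2:ℝ)) = 2 * (x * f (x^2)) := by
          intro x hx
          rw [show ((2:ℝ) - 1) = 1 by norm_num, Real.rpow_one,
            show (x:ℝ) ^ (2:ℝ) = x ^ 2 by rw [show (2:ℝ) = ((2:ℕ):ℝ) by norm_num,
              Real.rpow_natCast], smul_eq_mul]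
          ring
        rw [setIntegral_congr_fun measurableSet_Ioi h5, integral_const_mul] at h4
        linarith
    _ = π * ∫ t in Ioi (0:ℝ), f t := by ring

lemma integral_radial (φ : ℝ → ℝ) :
    ∫ z : ℝ × ℝ, φ (z.1^2 + z.2^2) ∂(P.prod P) = ∫ t in Ioi (0:ℝ), Real.exp (-t) * φ t := by
  rw [prodP_eq, integral_withDensity_eq_integral_smul
    (f := fun z : ℝ × ℝ => nn z.1 * nn z.2)
    ((nn_meas.comp measurable_fst).mul (nn_meas.comp measurable_snd))]
  have h : ∀ z : ℝ × ℝ, (nn z.1 * nn z.2 : ℝ≥0) • φ (z.1^2 + z.2^2)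
      = π⁻¹ * ((fun t => Real.exp (-t) * φ t) (z.1^2 + z.2^2)) := by
    intro z
    rw [NNReal.smul_def, smul_eq_mul, NNReal.coe_mul, nn_coe, nn_coe]
    have hππ : (Real.sqrt π)⁻¹ * (Real.sqrt π)⁻¹ = π⁻¹ := by
      rw [← mul_inv, Real.mul_self_sqrt pi_pos.le]
    have hexp : Real.exp (-z.1^2) * Real.exp (-z.2^2) = Real.exp (-(z.1^2 + z.2^2)) := by
      rw [← Real.exp_add]; ring_nf
    calc (Real.sqrt π)⁻¹ * Real.exp (-z.1^2) * ((Real.sqrt π)⁻¹ * Real.exp (-z.2^2))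
          * φ (z.1^2 + z.2^2)
        = ((Real.sqrt π)⁻¹ * (Real.sqrt π)⁻¹) * (Real.exp (-z.1^2) * Real.exp (-z.2^2))
          * φ (z.1^2 + z.2^2) := by ring
      _ = π⁻¹ * (Real.exp (-(z.1^2 + z.2^2)) * φ (z.1^2 + z.2^2)) := by
          rw [hππ, hexp]; ring
  simp_rw [h]
  rw [integral_const_mul, integral_radial_core (fun t => Real.exp (-t) * φ t)]
  rw [← mul_assoc, inv_mul_cancel₀ pi_pos.ne', one_mul]

lemma radial_indicator {γ : ℝ} (hγ : 0 < γ) (ψ : ℝ → ℝ) :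
    ∫ t in Ioi (0:ℝ), Real.exp (-t) * (if γ ≤ t then ψ t else 0)
      = ∫ t in Ioi γ, Real.exp (-t) * ψ t := by
  have h : ∀ t : ℝ, Real.exp (-t) * (if γ ≤ t then ψ t else 0)
      = (Ici γ).indicator (fun t => Real.exp (-t) * ψ t) t := by
    intro t
    simp only [indicator_apply, mem_Ici]
    split_ifs <;> simp
  simp_rw [h]
  rw [integral_indicator measurableSet_Ici, Measure.restrict_restrict measurableSet_Ici,
    show Ici γ ∩ Ioi (0:ℝ) = Ici γ from inter_eq_left.mpr (fun x hx => lt_of_lt_of_le hγ hx),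
    integral_Ici_eq_integral_Ioi]

lemma rad_one {γ : ℝ} (hγ : 0 < γ) :
    ∫ z : ℝ × ℝ, (if γ ≤ z.1^2 + z.2^2 then (1:ℝ) else 0) ∂(P.prod P) = Real.exp (-γ) := by
  rw [integral_radial (fun t => if γ ≤ t then (1:ℝ) else 0)]
  rw [radial_indicator hγ (fun _ => (1:ℝ))]
  simp_rw [mul_one]
  exact integral_exp_neg_Ioi γ

lemma rad_inv {γ : ℝ} (hγ : 0 < γ) :
    ∫ z : ℝ × ℝ, (if γ ≤ z.1^2 + z.2^2 then (z.1^2 + z.2^2)⁻¹ else 0) ∂(P.prod P)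
      = ∫ t in Ioi γ, Real.exp (-t) / t := by
  rw [integral_radial (fun t => if γ ≤ t then t⁻¹ else 0), radial_indicator hγ (fun t => t⁻¹)]
  simp_rw [div_eq_mul_inv]

lemma integral_id_P : ∫ x, x ∂P = 0 := by
  rw [P_eq, integral_withDensity_eq_integral_smul nn_meas]
  have h : ∀ x : ℝ, nn x • x = (Real.sqrt π)⁻¹ * (x * Real.exp (-x^2)) := by
    intro x; rw [NNReal.smul_def, smul_eq_mul, nn_coe]; ring
  simp_rw [h]
  rw [integral_const_mul]
  have hodd : ∫ x : ℝ, x * Real.exp (-x^2) = 0 := by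
    have h1 := integral_neg_eq_self (fun y : ℝ => y * Real.exp (-y^2)) volume
    simp only [neg_sq, neg_mul] at h1
    rw [integral_neg] at h1
    linarith
  rw [hodd, mul_zero]

lemma integrable_id_P : Integrable (fun x : ℝ => x) P := by
  rw [P_eq, integrable_withDensity_iff_integrable_smul nn_meas]
  have h : ∀ x : ℝ, nn x • x = (Real.sqrt π)⁻¹ * (x * Real.exp (-(1:ℝ)*x^2)) := by
    intro x; rw [NNReal.smul_def, smul_eq_mul, nn_coe]; ring_nf
  simp_rw [h]
  exact (integrable_mul_exp_neg_mul_sq one_pos).const_mul _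

lemma integrable_sq_expsq : Integrable (fun x : ℝ => x^2 * Real.exp (-(1:ℝ)*x^2)) := by
  have := integrable_rpow_mul_exp_neg_mul_sq (b := 1) one_pos (s := 2) (by norm_num)
  have h : ∀ x : ℝ, x ^ (2:ℝ) * Real.exp (-1*x^2) = x^2 * Real.exp (-(1:ℝ)*x^2) := by
    intro x
    rw [show (2:ℝ) = ((2:ℕ):ℝ) by norm_num, Real.rpow_natCast]
  simp_rw [h] at this
  exact this

lemma integrable_sq_P : Integrable (fun x : ℝ => x^2) P := by
  rw [P_eq, integrable_withDensity_iff_integrable_smul nn_meas]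
  have h : ∀ x : ℝ, nn x • (x^2) = (Real.sqrt π)⁻¹ * (x^2 * Real.exp (-(1:ℝ)*x^2)) := by
    intro x; rw [NNReal.smul_def, smul_eq_mul, nn_coe]; ring_nf
  simp_rw [h]
  exact integrable_sq_expsq.const_mul _

lemma integral_sq_P : ∫ x, x^2 ∂P = 1/2 := by
  rw [P_eq, integral_withDensity_eq_integral_smul nn_meas]
  have h : ∀ x : ℝ, nn x • (x^2) = (Real.sqrt π)⁻¹ * (x^2 * Real.exp (-x^2)) := by
    intro x; rw [NNReal.smul_def, smul_eq_mul, nn_coe]; ring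
  simp_rw [h]
  rw [integral_const_mul]
  have h2 : ∫ x : ℝ, x^2 * Real.exp (-x^2) = 2 * ∫ x in Ioi (0:ℝ), x^2 * Real.exp (-x^2) := by
    have := integral_comp_abs (f := fun t : ℝ => t^2 * Real.exp (-t^2))
    simp only [sq_abs] at this
    exact this
  have h3 : ∫ x in Ioi (0:ℝ), x^2 * Real.exp (-x^2) = Real.sqrt π / 4 := by
    have h4 := integral_rpow_mul_exp_neg_mul_rpow (p := 2) (q := 2) (b := 1) two_pos
      (by norm_num) one_pos
    have h5 : ∀ x ∈ Ioi (0:ℝ), x ^ (2:ℝ) * Real.exp (-1 * x ^ (2:ℝ))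
        = x^2 * Real.exp (-x^2) := by
      intro x _
      rw [show (2:ℝ) = ((2:ℕ):ℝ) by norm_num, Real.rpow_natCast]
      norm_num
    rw [setIntegral_congr_fun measurableSet_Ioi h5] at h4
    rw [h4]
    have hG : Real.Gamma ((2+1)/2) = Real.sqrt π / 2 := by
      rw [show ((2:ℝ)+1)/2 = 1/2 + 1 by norm_num, Real.Gamma_add_one (by norm_num),
        Real.Gamma_one_half_eq]
      ring
    rw [hG, Real.one_rpow]
    ring
  rw [h2, h3]
  rw [← mul_assoc]
  rw [show (Real.sqrt π)⁻¹ * 2 * (Real.sqrt π / 4) = (Real.sqrt π)⁻¹ * Real.sqrt π / 2 by ring,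
    inv_mul_cancel₀ (Real.sqrt_ne_zero'.mpr pi_pos)]

/-! ### The bounded radial factor functions -/

noncomputable def g1 (γ : ℝ) : ℝ × ℝ → ℝ := fun p => if γ ≤ p.1^2 + p.2^2 then 1 else 0
noncomputable def g2 (γ : ℝ) : ℝ × ℝ → ℝ :=
  fun p => if γ ≤ p.1^2 + p.2^2 then p.1 / (p.1^2 + p.2^2) else 0
noncomputable def g3 (γ : ℝ) : ℝ × ℝ → ℝ :=
  fun p => if γ ≤ p.1^2 + p.2^2 then p.2 / (p.1^2 + p.2^2) else 0
noncomputable def g4 (γ : ℝ) : ℝ × ℝ → ℝ :=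
  fun p => if γ ≤ p.1^2 + p.2^2 then p.1^2 / (p.1^2 + p.2^2)^2 else 0
noncomputable def g5 (γ : ℝ) : ℝ × ℝ → ℝ :=
  fun p => if γ ≤ p.1^2 + p.2^2 then p.1 * p.2 / (p.1^2 + p.2^2)^2 else 0
noncomputable def g6 (γ : ℝ) : ℝ × ℝ → ℝ :=
  fun p => if γ ≤ p.1^2 + p.2^2 then p.2^2 / (p.1^2 + p.2^2)^2 else 0
noncomputable def g46 (γ : ℝ) : ℝ × ℝ → ℝ :=
  fun p => if γ ≤ p.1^2 + p.2^2 then (p.1^2 + p.2^2)⁻¹ else 0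

lemma mset (γ : ℝ) : MeasurableSet {p : ℝ × ℝ | γ ≤ p.1^2 + p.2^2} :=
  measurableSet_le measurable_const
    ((measurable_fst.pow_const 2).add (measurable_snd.pow_const 2))

lemma g1_meas (γ : ℝ) : Measurable (g1 γ) :=
  Measurable.ite (mset γ) measurable_const measurable_const
lemma g2_meas (γ : ℝ) : Measurable (g2 γ) :=
  Measurable.ite (mset γ)
    (measurable_fst.div ((measurable_fst.pow_const 2).add (measurable_snd.pow_const 2)))
    measurable_const
lemma g3_meas (γ : ℝ) : Measurable (g3 γ) :=
  Measurable.ite (mset γ)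
    (measurable_snd.div ((measurable_fst.pow_const 2).add (measurable_snd.pow_const 2)))
    measurable_const
lemma g4_meas (γ : ℝ) : Measurable (g4 γ) :=
  Measurable.ite (mset γ)
    ((measurable_fst.pow_const 2).div
      (((measurable_fst.pow_const 2).add (measurable_snd.pow_const 2)).pow_const 2))
    measurable_const
lemma g5_meas (γ : ℝ) : Measurable (g5 γ) :=
  Measurable.ite (mset γ)
    ((measurable_fst.mul measurable_snd).div
      (((measurable_fst.pow_const 2).add (measurable_snd.pow_const 2)).pow_const 2))
    measurable_const
lemma g6_meas (γ : ℝ) : Measurable (g6 γ) :=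
  Measurable.ite (mset γ)
    ((measurable_snd.pow_const 2).div
      (((measurable_fst.pow_const 2).add (measurable_snd.pow_const 2)).pow_const 2))
    measurable_const
lemma g46_meas (γ : ℝ) : Measurable (g46 γ) :=
  Measurable.ite (mset γ)
    (((measurable_fst.pow_const 2).add (measurable_snd.pow_const 2)).inv)
    measurable_const

lemma g1_bdd (γ : ℝ) (p : ℝ × ℝ) : |g1 γ p| ≤ 1 := by
  unfold g1; split_ifs <;> simp

lemma g2_bdd {γ : ℝ} (hγ : 0 < γ) (p : ℝ × ℝ) : |g2 γ p| ≤ (Real.sqrt γ)⁻¹ := by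
  unfold g2
  split_ifs with h
  · have hR : (0:ℝ) < p.1^2 + p.2^2 := lt_of_lt_of_le hγ h
    rw [abs_div, abs_of_pos hR]
    calc |p.1| / (p.1^2 + p.2^2)
        ≤ Real.sqrt (p.1^2 + p.2^2) / (p.1^2 + p.2^2) := by
          gcongr
          exact Real.abs_le_sqrt (by nlinarith [sq_nonneg p.2])
      _ = (Real.sqrt (p.1^2 + p.2^2))⁻¹ := Real.sqrt_div_self
      _ ≤ (Real.sqrt γ)⁻¹ := by
          gcongr
  · simp only [abs_zero]
    positivity

lemma g3_bdd {γ : ℝ} (hγ : 0 < γ) (p : ℝ × ℝ) : |g3 γ p| ≤ (Real.sqrt γ)⁻¹ := by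
  unfold g3
  split_ifs with h
  · have hR : (0:ℝ) < p.1^2 + p.2^2 := lt_of_lt_of_le hγ h
    rw [abs_div, abs_of_pos hR]
    calc |p.2| / (p.1^2 + p.2^2)
        ≤ Real.sqrt (p.1^2 + p.2^2) / (p.1^2 + p.2^2) := by
          gcongr
          exact Real.abs_le_sqrt (by nlinarith [sq_nonneg p.1])
      _ = (Real.sqrt (p.1^2 + p.2^2))⁻¹ := Real.sqrt_div_self
      _ ≤ (Real.sqrt γ)⁻¹ := by
          gcongr
  · simp only [abs_zero]
    positivity

lemma g4_bdd {γ : ℝ} (hγ : 0 < γ) (p : ℝ × ℝ) : |g4 γ p| ≤ γ⁻¹ := by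
  unfold g4
  split_ifs with h
  · have hR : (0:ℝ) < p.1^2 + p.2^2 := lt_of_lt_of_le hγ h
    rw [abs_div, abs_of_nonneg (sq_nonneg p.1), abs_of_pos (by positivity : (0:ℝ) < (p.1^2+p.2^2)^2),
      div_le_iff₀ (by positivity)]
    have key : (0:ℝ) ≤ γ⁻¹ * (p.1^2 + p.2^2) * ((p.1^2 + p.2^2) - γ) :=
      mul_nonneg (mul_nonneg (inv_pos.mpr hγ).le hR.le) (sub_nonneg.mpr h)
    have hone : γ⁻¹ * γ = 1 := inv_mul_cancel₀ hγ.ne'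
    nlinarith [sq_nonneg p.2]
  · simp only [abs_zero]
    positivity

lemma g6_bdd {γ : ℝ} (hγ : 0 < γ) (p : ℝ × ℝ) : |g6 γ p| ≤ γ⁻¹ := by
  unfold g6
  split_ifs with h
  · have hR : (0:ℝ) < p.1^2 + p.2^2 := lt_of_lt_of_le hγ h
    rw [abs_div, abs_of_nonneg (sq_nonneg p.2), abs_of_pos (by positivity : (0:ℝ) < (p.1^2+p.2^2)^2),
      div_le_iff₀ (by positivity)]
    have key : (0:ℝ) ≤ γ⁻¹ * (p.1^2 + p.2^2) * ((p.1^2 + p.2^2) - γ) :=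
      mul_nonneg (mul_nonneg (inv_pos.mpr hγ).le hR.le) (sub_nonneg.mpr h)
    have hone : γ⁻¹ * γ = 1 := inv_mul_cancel₀ hγ.ne'
    nlinarith [sq_nonneg p.1]
  · simp only [abs_zero]
    positivity

lemma g5_bdd {γ : ℝ} (hγ : 0 < γ) (p : ℝ × ℝ) : |g5 γ p| ≤ γ⁻¹ := by
  unfold g5
  split_ifs with h
  · have hR : (0:ℝ) < p.1^2 + p.2^2 := lt_of_lt_of_le hγ h
    rw [abs_div, abs_of_pos (by positivity : (0:ℝ) < (p.1^2+p.2^2)^2),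
      div_le_iff₀ (by positivity)]
    have key : (0:ℝ) ≤ γ⁻¹ * (p.1^2 + p.2^2) * ((p.1^2 + p.2^2) - γ) :=
      mul_nonneg (mul_nonneg (inv_pos.mpr hγ).le hR.le) (sub_nonneg.mpr h)
    have hone : γ⁻¹ * γ = 1 := inv_mul_cancel₀ hγ.ne'
    have habs : |p.1 * p.2| ≤ (p.1^2 + p.2^2) / 2 := by
      rw [abs_mul]
      nlinarith [sq_nonneg (|p.1| - |p.2|), sq_abs p.1, sq_abs p.2]
    nlinarith
  · simp only [abs_zero]
    positivity

lemma g46_eq {γ : ℝ} (hγ : 0 < γ) (p : ℝ × ℝ) : g4 γ p + g6 γ p = g46 γ p := by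
  unfold g4 g6 g46
  split_ifs with h
  · have hR : (0:ℝ) < p.1^2 + p.2^2 := lt_of_lt_of_le hγ h
    field_simp
  · ring

/-- The pointwise algebraic identity. -/
lemma pointwise {ρ s γ lam : ℝ} (hγ : 0 < γ) (a b u w : ℝ) :
    (if γ ≤ a^2 + b^2 then lam * (ρ*(a^2+b^2) + s*(u*a + w*b)) / (a^2+b^2) else 0)^2
      = lam^2*ρ^2 * g1 γ (a,b)
        + (2*lam^2*ρ*s) * (g2 γ (a,b) * u + g3 γ (a,b) * w)
        + lam^2*s^2 * (g4 γ (a,b) * u^2 + 2*(g5 γ (a,b) * (u*w)) + g6 γ (a,b) * w^2) := by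
  unfold g1 g2 g3 g4 g5 g6
  by_cases h : γ ≤ a^2 + b^2
  · simp only [if_pos h]
    have hR : (0:ℝ) < a^2 + b^2 := lt_of_lt_of_le hγ h
    field_simp
    ring
  · simp only [if_neg h]
    ring

lemma re_eq (ρ s : ℝ) (z w : ℂ) :
    ((starRingEnd ℂ) ((ρ:ℂ)*z + (s:ℂ)*w) * z).re
      = ρ*(z.re^2+z.im^2) + s*(w.re*z.re + w.im*z.im) := by
  simp only [map_add, map_mul, Complex.conj_ofReal, Complex.add_re, Complex.mul_re,
    Complex.mul_im, Complex.add_im, Complex.ofReal_re, Complex.ofReal_im,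
    RingHom.coe_coe, Complex.conj_re, Complex.conj_im]
  ring

end AnalogAux

open AnalogAux Real Set

/-- Second moment of the analog-transmission distortion: with `hhat, v` independent standard
complex Gaussians, `h = ρ·hhat + √(1−ρ²)v`, `λ = e^{γ_th}/ρ`, and
`ξ = λ·Re(h*·hhat)/|hhat|²·1{|hhat|² ≥ γ_th}`, one has
`E[ξ²] = e^{γ_th} + ((1−ρ²)/(2ρ²))·e^{2γ_th}·E₁(γ_th)` where `E₁(x) = ∫_x^∞ e^{−t}/t dt`. -/
theorem analog_distortion_second_moment
    {Ω : Type*} [MeasurableSpace Ω] (μ : Measure Ω) [IsProbabilityMeasure μ]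
    (hhat v : Ω → ℂ) (hhhatmeas : Measurable hhat) (hvmeas : Measurable v)
    (hgauss : ∀ f ∈ ({fun ω => (hhat ω).re, fun ω => (hhat ω).im,
        fun ω => (v ω).re, fun ω => (v ω).im} : Set (Ω → ℝ)),
      Measure.map f μ = gaussianReal 0 (1 / 2))
    (hindep : iIndepFun
      ![fun ω => (hhat ω).re, fun ω => (hhat ω).im, fun ω => (v ω).re, fun ω => (v ω).im] μ)
    (ρ γth : ℝ) (hρ : ρ ∈ Set.Ioc (0 : ℝ) 1) (hγth : 0 < γth) :
    ∫ ω, (if γth ≤ Complex.normSq (hhat ω) then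
        (Real.exp γth / ρ) *
          ((starRingEnd ℂ) ((ρ : ℂ) * hhat ω + (Real.sqrt (1 - ρ ^ 2) : ℂ) * v ω) * hhat ω).re /
            Complex.normSq (hhat ω)
      else 0) ^ 2 ∂μ =
      Real.exp γth + ((1 - ρ ^ 2) / (2 * ρ ^ 2)) * Real.exp (2 * γth) *
        (∫ t in Set.Ioi γth, Real.exp (-t) / t) := by
  obtain ⟨hρ0, hρ1⟩ := hρ
  set X : Ω → ℝ := fun ω => (hhat ω).re with hX
  set Y : Ω → ℝ := fun ω => (hhat ω).im with hY
  set U : Ω → ℝ := fun ω => (v ω).re with hU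
  set W : Ω → ℝ := fun ω => (v ω).im with hW
  have hXm : Measurable X := Complex.measurable_re.comp hhhatmeas
  have hYm : Measurable Y := Complex.measurable_im.comp hhhatmeas
  have hUm : Measurable U := Complex.measurable_re.comp hvmeas
  have hWm : Measurable W := Complex.measurable_im.comp hvmeas
  have hmeas : ∀ i, Measurable (![X, Y, U, W] i) := by
    intro i; fin_cases i <;> simp [hXm, hYm, hUm, hWm]
  -- laws
  have hXlaw : Measure.map X μ = P := by
    rw [hgauss _ (Set.mem_insert _ _)]; rfl
  have hYlaw : Measure.map Y μ = P := by
    rw [hgauss _ (Set.mem_insert_of_mem _ (Set.mem_insert _ _))]; rfl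
  have hUlaw : Measure.map U μ = P := by
    rw [hgauss _ (Set.mem_insert_of_mem _ (Set.mem_insert_of_mem _ (Set.mem_insert _ _)))]; rfl
  have hWlaw : Measure.map W μ = P := by
    rw [hgauss _ (Set.mem_insert_of_mem _ (Set.mem_insert_of_mem _
      (Set.mem_insert_of_mem _ rfl)))]; rfl
  -- independence facts
  have iXY : IndepFun X Y μ := hindep.indepFun (show (0:Fin 4) ≠ 1 by decide)
  have iUW : IndepFun U W μ := hindep.indepFun (show (2:Fin 4) ≠ 3 by decide)
  have iXYU : IndepFun (fun ω => (X ω, Y ω)) U μ := by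
    have := hindep.indepFun_prodMk hmeas 0 1 2 (by decide) (by decide)
    simpa using this
  have iXYW : IndepFun (fun ω => (X ω, Y ω)) W μ := by
    have := hindep.indepFun_prodMk hmeas 0 1 3 (by decide) (by decide)
    simpa using this
  have iXYUW : IndepFun (fun ω => (X ω, Y ω)) (fun ω => (U ω, W ω)) μ := by
    have := hindep.indepFun_prodMk_prodMk hmeas 0 1 2 3
      (by decide) (by decide) (by decide) (by decide)
    simpa using this
  have pairm : Measurable (fun ω => (X ω, Y ω)) := hXm.prodMk hYm
  have pairm2 : Measurable (fun ω => (U ω, W ω)) := hUm.prodMk hWm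
  have hpairXY : Measure.map (fun ω => (X ω, Y ω)) μ = P.prod P := by
    rw [(indepFun_iff_map_prod_eq_prod_map_map hXm.aemeasurable hYm.aemeasurable).mp iXY,
      hXlaw, hYlaw]
  -- integrability of the gaussian coordinates
  have intU : Integrable U μ := by
    have h0 : Integrable (fun x : ℝ => x) (Measure.map U μ) := by
      rw [hUlaw]; exact integrable_id_P
    have := (integrable_map_measure measurable_id.aestronglyMeasurable hUm.aemeasurable).mp h0
    simpa [Function.comp] using this
  have intW : Integrable W μ := by
    have h0 : Integrable (fun x : ℝ => x) (Measure.map W μ) := by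
      rw [hWlaw]; exact integrable_id_P
    have := (integrable_map_measure measurable_id.aestronglyMeasurable hWm.aemeasurable).mp h0
    simpa [Function.comp] using this
  have intU2 : Integrable (fun ω => U ω ^ 2) μ := by
    have h0 : Integrable (fun x : ℝ => x ^ 2) (Measure.map U μ) := by
      rw [hUlaw]; exact integrable_sq_P
    have := (integrable_map_measure (measurable_id.pow_const 2).aestronglyMeasurable
      hUm.aemeasurable).mp h0
    simpa [Function.comp_def] using this
  have intW2 : Integrable (fun ω => W ω ^ 2) μ := by
    have h0 : Integrable (fun x : ℝ => x ^ 2) (Measure.map W μ) := by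
      rw [hWlaw]; exact integrable_sq_P
    have := (integrable_map_measure (measurable_id.pow_const 2).aestronglyMeasurable
      hWm.aemeasurable).mp h0
    simpa [Function.comp_def] using this
  have intUW : Integrable (fun ω => U ω * W ω) μ := by
    exact iUW.integrable_mul intU intW
  -- moments
  have hEU : ∫ ω, U ω ∂μ = 0 := by
    have h := integral_map (μ := μ) (φ := U) hUm.aemeasurable
      (f := fun x : ℝ => x) measurable_id.aestronglyMeasurable
    rw [hUlaw] at h
    rw [← h]; exact integral_id_P
  have hEW : ∫ ω, W ω ∂μ = 0 := by
    have h := integral_map (μ := μ) (φ := W) hWm.aemeasurable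
      (f := fun x : ℝ => x) measurable_id.aestronglyMeasurable
    rw [hWlaw] at h
    rw [← h]; exact integral_id_P
  have hEU2 : ∫ ω, U ω ^ 2 ∂μ = 1/2 := by
    have h := integral_map (μ := μ) (φ := U) hUm.aemeasurable
      (f := fun x : ℝ => x ^ 2) (measurable_id.pow_const 2).aestronglyMeasurable
    rw [hUlaw] at h
    rw [← h]; exact integral_sq_P
  have hEW2 : ∫ ω, W ω ^ 2 ∂μ = 1/2 := by
    have h := integral_map (μ := μ) (φ := W) hWm.aemeasurable
      (f := fun x : ℝ => x ^ 2) (measurable_id.pow_const 2).aestronglyMeasurable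
    rw [hWlaw] at h
    rw [← h]; exact integral_sq_P
  have hEUW : ∫ ω, U ω * W ω ∂μ = 0 := by
    have h := iUW.integral_mul_eq_mul_integral intU.aestronglyMeasurable intW.aestronglyMeasurable
    have h2 : ∫ ω, U ω * W ω ∂μ = (∫ ω, U ω ∂μ) * ∫ ω, W ω ∂μ := h
    rw [h2, hEU, hEW, mul_zero]
  -- integrability of bounded measurable functions
  have bdd_int : ∀ (f : Ω → ℝ), Measurable f → ∀ C : ℝ, (∀ ω, |f ω| ≤ C) → Integrable f μ := by
    intro f hf C hC
    exact (integrable_const C).mono' hf.aestronglyMeasurable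
      (Filter.Eventually.of_forall (fun ω => by simpa [Real.norm_eq_abs] using hC ω))
  have intF1 : Integrable (fun ω => g1 γth (X ω, Y ω)) μ :=
    bdd_int _ ((g1_meas γth).comp pairm) 1 (fun ω => g1_bdd γth _)
  have intF2 : Integrable (fun ω => g2 γth (X ω, Y ω)) μ :=
    bdd_int _ ((g2_meas γth).comp pairm) _ (fun ω => g2_bdd hγth _)
  have intF3 : Integrable (fun ω => g3 γth (X ω, Y ω)) μ :=
    bdd_int _ ((g3_meas γth).comp pairm) _ (fun ω => g3_bdd hγth _)
  have intF4 : Integrable (fun ω => g4 γth (X ω, Y ω)) μ :=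
    bdd_int _ ((g4_meas γth).comp pairm) _ (fun ω => g4_bdd hγth _)
  have intF5 : Integrable (fun ω => g5 γth (X ω, Y ω)) μ :=
    bdd_int _ ((g5_meas γth).comp pairm) _ (fun ω => g5_bdd hγth _)
  have intF6 : Integrable (fun ω => g6 γth (X ω, Y ω)) μ :=
    bdd_int _ ((g6_meas γth).comp pairm) _ (fun ω => g6_bdd hγth _)
  -- integrability of products
  have intT2 : Integrable (fun ω => g2 γth (X ω, Y ω) * U ω) μ :=
    intU.bdd_mul ((g2_meas γth).comp pairm).aestronglyMeasurable
      (c := (Real.sqrt γth)⁻¹) (Filter.Eventually.of_forall fun ω => by simpa [Real.norm_eq_abs] using g2_bdd hγth (X ω, Y ω))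
  have intT3 : Integrable (fun ω => g3 γth (X ω, Y ω) * W ω) μ :=
    intW.bdd_mul ((g3_meas γth).comp pairm).aestronglyMeasurable
      (c := (Real.sqrt γth)⁻¹) (Filter.Eventually.of_forall fun ω => by simpa [Real.norm_eq_abs] using g3_bdd hγth (X ω, Y ω))
  have intT4 : Integrable (fun ω => g4 γth (X ω, Y ω) * U ω ^ 2) μ :=
    intU2.bdd_mul ((g4_meas γth).comp pairm).aestronglyMeasurable
      (c := γth⁻¹) (Filter.Eventually.of_forall fun ω => by simpa [Real.norm_eq_abs] using g4_bdd hγth (X ω, Y ω))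
  have intT5 : Integrable (fun ω => g5 γth (X ω, Y ω) * (U ω * W ω)) μ :=
    intUW.bdd_mul ((g5_meas γth).comp pairm).aestronglyMeasurable
      (c := γth⁻¹) (Filter.Eventually.of_forall fun ω => by simpa [Real.norm_eq_abs] using g5_bdd hγth (X ω, Y ω))
  have intT6 : Integrable (fun ω => g6 γth (X ω, Y ω) * W ω ^ 2) μ :=
    intW2.bdd_mul ((g6_meas γth).comp pairm).aestronglyMeasurable
      (c := γth⁻¹) (Filter.Eventually.of_forall fun ω => by simpa [Real.norm_eq_abs] using g6_bdd hγth (X ω, Y ω))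
  -- factorization of products
  have hT2 : ∫ ω, g2 γth (X ω, Y ω) * U ω ∂μ
      = (∫ ω, g2 γth (X ω, Y ω) ∂μ) * ∫ ω, U ω ∂μ := by
    have h := (iXYU.comp (g2_meas γth) measurable_id).integral_mul_eq_mul_integral intF2.aestronglyMeasurable intU.aestronglyMeasurable
    simpa [Function.comp_def] using h
  have hT3 : ∫ ω, g3 γth (X ω, Y ω) * W ω ∂μ
      = (∫ ω, g3 γth (X ω, Y ω) ∂μ) * ∫ ω, W ω ∂μ := by
    have h := (iXYW.comp (g3_meas γth) measurable_id).integral_mul_eq_mul_integral intF3.aestronglyMeasurable intW.aestronglyMeasurable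
    simpa [Function.comp_def] using h
  have hT4 : ∫ ω, g4 γth (X ω, Y ω) * U ω ^ 2 ∂μ
      = (∫ ω, g4 γth (X ω, Y ω) ∂μ) * ∫ ω, U ω ^ 2 ∂μ := by
    have h := (iXYU.comp (g4_meas γth) (measurable_id.pow_const 2)).integral_mul_eq_mul_integral
      intF4.aestronglyMeasurable intU2.aestronglyMeasurable
    simpa [Function.comp_def] using h
  have hT5 : ∫ ω, g5 γth (X ω, Y ω) * (U ω * W ω) ∂μ
      = (∫ ω, g5 γth (X ω, Y ω) ∂μ) * ∫ ω, U ω * W ω ∂μ := by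
    have h := (iXYUW.comp (g5_meas γth)
      (measurable_fst.mul measurable_snd)).integral_mul_eq_mul_integral intF5.aestronglyMeasurable intUW.aestronglyMeasurable
    simpa [Function.comp_def] using h
  have hT6 : ∫ ω, g6 γth (X ω, Y ω) * W ω ^ 2 ∂μ
      = (∫ ω, g6 γth (X ω, Y ω) ∂μ) * ∫ ω, W ω ^ 2 ∂μ := by
    have h := (iXYW.comp (g6_meas γth) (measurable_id.pow_const 2)).integral_mul_eq_mul_integral
      intF6.aestronglyMeasurable intW2.aestronglyMeasurable
    simpa [Function.comp_def] using h
  -- values of the radial integrals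
  have EF1 : ∫ ω, g1 γth (X ω, Y ω) ∂μ = Real.exp (-γth) := by
    have h := integral_map (μ := μ) (φ := fun ω => (X ω, Y ω)) pairm.aemeasurable
      (f := g1 γth) (g1_meas γth).aestronglyMeasurable
    rw [hpairXY] at h
    calc ∫ ω, g1 γth (X ω, Y ω) ∂μ = ∫ z, g1 γth z ∂(P.prod P) := h.symm
      _ = Real.exp (-γth) := by simpa [g1] using rad_one hγth
  have EF46 : (∫ ω, g4 γth (X ω, Y ω) ∂μ) + ∫ ω, g6 γth (X ω, Y ω) ∂μ
      = ∫ t in Set.Ioi γth, Real.exp (-t) / t := by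
    rw [← integral_add intF4 intF6]
    have hpt : ∀ ω, g4 γth (X ω, Y ω) + g6 γth (X ω, Y ω) = g46 γth (X ω, Y ω) :=
      fun ω => g46_eq hγth _
    rw [integral_congr_ae (Filter.Eventually.of_forall hpt)]
    have h := integral_map (μ := μ) (φ := fun ω => (X ω, Y ω)) pairm.aemeasurable
      (f := g46 γth) (g46_meas γth).aestronglyMeasurable
    rw [hpairXY] at h
    calc ∫ ω, g46 γth (X ω, Y ω) ∂μ = ∫ z, g46 γth z ∂(P.prod P) := h.symm
      _ = ∫ t in Set.Ioi γth, Real.exp (-t) / t := by simpa [g46] using rad_inv hγth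
  -- pointwise rewrite of the integrand
  have hns : ∀ ω, Complex.normSq (hhat ω) = X ω ^ 2 + Y ω ^ 2 := by
    intro ω
    rw [Complex.normSq_apply]
    simp only [hX, hY]
    ring
  have key : ∀ ω, (if γth ≤ Complex.normSq (hhat ω) then
        (Real.exp γth / ρ) *
          ((starRingEnd ℂ) ((ρ : ℂ) * hhat ω + (Real.sqrt (1 - ρ ^ 2) : ℂ) * v ω) * hhat ω).re /
            Complex.normSq (hhat ω)
      else 0) ^ 2
      = (Real.exp γth / ρ)^2 * ρ^2 * g1 γth (X ω, Y ω)
        + (2*(Real.exp γth / ρ)^2*ρ*(Real.sqrt (1 - ρ ^ 2)))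
            * (g2 γth (X ω, Y ω) * U ω + g3 γth (X ω, Y ω) * W ω)
        + (Real.exp γth / ρ)^2*(Real.sqrt (1 - ρ ^ 2))^2
            * (g4 γth (X ω, Y ω) * U ω ^ 2 + 2*(g5 γth (X ω, Y ω) * (U ω * W ω))
                + g6 γth (X ω, Y ω) * W ω ^ 2) := by
    intro ω
    rw [hns ω, re_eq]
    have h := pointwise (ρ := ρ) (s := Real.sqrt (1 - ρ ^ 2)) (lam := Real.exp γth / ρ)
      hγth (X ω) (Y ω) (U ω) (W ω)
    simpa [hX, hY, hU, hW] using h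
  rw [integral_congr_ae (Filter.Eventually.of_forall key)]
  -- split the integral
  have intA : Integrable (fun ω => (Real.exp γth / ρ)^2 * ρ^2 * g1 γth (X ω, Y ω)) μ :=
    intF1.const_mul _
  have intB : Integrable (fun ω => (2*(Real.exp γth / ρ)^2*ρ*(Real.sqrt (1 - ρ ^ 2)))
      * (g2 γth (X ω, Y ω) * U ω + g3 γth (X ω, Y ω) * W ω)) μ :=
    (intT2.add intT3).const_mul _
  have intC : Integrable (fun ω => (Real.exp γth / ρ)^2*(Real.sqrt (1 - ρ ^ 2))^2
      * (g4 γth (X ω, Y ω) * U ω ^ 2 + 2*(g5 γth (X ω, Y ω) * (U ω * W ω))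
          + g6 γth (X ω, Y ω) * W ω ^ 2)) μ :=
    ((intT4.add (intT5.const_mul 2)).add intT6).const_mul _
  have intT5' : Integrable (fun ω => 2*(g5 γth (X ω, Y ω) * (U ω * W ω))) μ :=
    intT5.const_mul 2
  have intT45 : Integrable (fun ω => g4 γth (X ω, Y ω) * U ω ^ 2
      + 2*(g5 γth (X ω, Y ω) * (U ω * W ω))) μ := intT4.add intT5'
  have intAB : Integrable (fun ω => (Real.exp γth / ρ)^2 * ρ^2 * g1 γth (X ω, Y ω)
      + (2*(Real.exp γth / ρ)^2*ρ*(Real.sqrt (1 - ρ ^ 2)))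
          * (g2 γth (X ω, Y ω) * U ω + g3 γth (X ω, Y ω) * W ω)) μ := intA.add intB
  rw [integral_add intAB intC]
  rw [integral_add intA intB]
  rw [integral_const_mul, integral_const_mul, integral_const_mul]
  rw [integral_add intT2 intT3, integral_add intT45 intT6,
    integral_add intT4 intT5', integral_const_mul]
  rw [hT2, hT3, hT4, hT5, hT6, hEU, hEW, hEU2, hEW2, hEUW, EF1]
  -- now pure algebra
  have hs2 : (Real.sqrt (1 - ρ ^ 2))^2 = 1 - ρ^2 := Real.sq_sqrt (by nlinarith)
  rw [hs2]
  rw [← EF46]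
  have hexp2 : Real.exp (2 * γth) = Real.exp γth * Real.exp γth := by
    rw [two_mul, Real.exp_add]
  have hexpneg : Real.exp (-γth) = (Real.exp γth)⁻¹ := Real.exp_neg γth
  rw [hexp2, hexpneg]
  have hρne : ρ ≠ 0 := hρ0.ne'
  have hexpne : Real.exp γth ≠ 0 := (Real.exp_pos γth).ne'
  field_simp
  ring
end
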